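/- Let a < b, μ^L ≤ μ^U, 0 < Σ^L ≤ Σ^U, μ^c = (a+b)/2, and define F(μ,Σ) = ∫_a^b N(ξ|μ,Σ) dξ. Let μ̲* ∈ {μ^L, μ^U} be a point maximizing |μ − μ^c| over [μ^L, μ^U], and let Σ̲* ∈ {Σ^L, Σ^U} satisfy F(μ̲*, Σ̲*) = min( F(μ̲*, Σ^L), F(μ̲*, Σ^U) ). Let μ̄* be the point of [μ^L, μ^U] minimizing |μ − μ^c|, and set Σ̄* = Σ^L if μ̄* ∈ [a,b], and otherwise let Σ̄* be the point of [Σ^L, Σ^U] closest to Σ^c(μ̄*) = ((μ̄*−a)² − (μ̄*−b)²)/(2 log((μ̄*−a)/(μ̄*−b))). Then for every μ ∈ [μ^L, μ^U] and Σ ∈ [Σ^L, Σ^U] it holds that F(μ̲*, Σ̲*) ≤ F(μ, Σ) ≤ F(μ̄*, Σ̄*). -/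

import Mathlib

/-!
Write `F(μ,v) = Φ((b−μ)/√v) − Φ((a−μ)/√v)`. In the mean, `F` is symmetric about `μc` and
`∂F/∂μ = N(a) − N(b) ≤ 0` to the right of `μc`, so `F` decreases with `|μ − μc|`. In the
variance, `∂F/∂v = ((a−μ)N(a) − (b−μ)N(b)) / (2v)`; this is `≤ 0` for `μ ∈ [a,b]`, and for `μ`
outside `[a,b]` it is `≥ 0` exactly when `v ≤ Σc(μ)` (compare `p e^{-p²/2v}` with `q e^{-q²/2v}`
for the distances `p < q` to the two ends). So `F(μ,·)` is unimodal with peak `Σc(μ)`: over a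
variance interval it is smallest at an endpoint and largest at the point nearest the peak.
-/

open MeasureTheory Real Set

/-- One-dimensional Gaussian density `N(ξ|μ,v) = (2πv)^{-1/2} exp(−(ξ−μ)²/(2v))`. -/
noncomputable def gaussPDF (μ v ξ : ℝ) : ℝ :=
  (Real.sqrt (2 * Real.pi * v))⁻¹ * Real.exp (-((ξ - μ) ^ 2) / (2 * v))

/-- The Gaussian box probability `F(μ,v) = ∫_a^b N(ξ|μ,v) dξ`. -/
noncomputable def gaussBoxProb (a b μ v : ℝ) : ℝ :=
  ∫ ξ in Set.Icc a b, gaussPDF μ v ξ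

section Unimodal

variable {f : ℝ → ℝ} {x y c v w : ℝ}

theorem min_le_of_monotoneOn_of_antitoneOn (hmono : MonotoneOn f (Icc x c))
    (hanti : AntitoneOn f (Icc c y)) (hv : v ∈ Icc x y) : min (f x) (f y) ≤ f v := by
  rcases le_total v c with hvc | hcv
  · exact (min_le_left _ _).trans (hmono ⟨le_rfl, hv.1.trans hvc⟩ ⟨hv.1, hvc⟩ hv.1)
  · exact (min_le_right _ _).trans (hanti ⟨hcv, hv.2⟩ ⟨hcv.trans hv.2, le_rfl⟩ hv.2)

theorem le_of_monotoneOn_of_antitoneOn_of_nearest (hmono : MonotoneOn f (Icc x c))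
    (hanti : AntitoneOn f (Icc c y)) (hv : v ∈ Icc x y) (hw : w ∈ Icc x y)
    (hnear : ∀ u ∈ Icc x y, |w - c| ≤ |u - c|) : f v ≤ f w := by
  have hwv := hnear v hv
  rcases le_total v c with hvc | hcv
  · have hvw : v ≤ w := by
      rw [abs_of_nonpos (sub_nonpos.2 hvc)] at hwv
      linarith [neg_abs_le (w - c)]
    have hwc : w ≤ c := by
      by_contra! hcw
      have := hnear c ⟨hv.1.trans hvc, hcw.le.trans hw.2⟩
      rw [sub_self, abs_zero, abs_nonpos_iff, sub_eq_zero] at this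
      exact hcw.ne' this
    exact hmono ⟨hv.1, hvc⟩ ⟨hv.1.trans hvw, hwc⟩ hvw
  · have hwv' : w ≤ v := by
      rw [abs_of_nonneg (sub_nonneg.2 hcv)] at hwv
      linarith [le_abs_self (w - c)]
    have hcw : c ≤ w := by
      by_contra! hwc
      have := hnear c ⟨hw.1.trans hwc.le, hcv.trans hv.2⟩
      rw [sub_self, abs_zero, abs_nonpos_iff, sub_eq_zero] at this
      exact hwc.ne this
    exact hanti ⟨hcw, hw.2⟩ ⟨hcv, hv.2⟩ hwv'

theorem le_of_abs_sub_le_of_antitoneOn (hsymm : ∀ z, f (2 * c - z) = f z)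
    (hanti : AntitoneOn f (Ici c)) (h : |x - c| ≤ |y - c|) : f y ≤ f x := by
  have hfold : ∀ z, f z = f (c + |z - c|) := by
    intro z
    rcases abs_cases (z - c) with ⟨hz, -⟩ | ⟨hz, -⟩
    · rw [hz, add_sub_cancel]
    · rw [hz, ← hsymm z]
      ring_nf
  rw [hfold x, hfold y]
  exact hanti (by simp) (by simp) (by linarith)

end Unimodal

section DerivSign

variable {D : Set ℝ} {f f' : ℝ → ℝ}

theorem monotoneOn_of_hasDerivAt_nonneg (hD : Convex ℝ D) (hf : ∀ x ∈ D, HasDerivAt f (f' x) x)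
    (hf' : ∀ x ∈ interior D, 0 ≤ f' x) : MonotoneOn f D :=
  monotoneOn_of_hasDerivWithinAt_nonneg hD (fun x hx => (hf x hx).continuousAt.continuousWithinAt)
    (fun x hx => (hf x (interior_subset hx)).hasDerivWithinAt) hf'

theorem antitoneOn_of_hasDerivAt_nonpos (hD : Convex ℝ D) (hf : ∀ x ∈ D, HasDerivAt f (f' x) x)
    (hf' : ∀ x ∈ interior D, f' x ≤ 0) : AntitoneOn f D :=
  antitoneOn_of_hasDerivWithinAt_nonpos hD (fun x hx => (hf x hx).continuousAt.continuousWithinAt)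
    (fun x hx => (hf x (interior_subset hx)).hasDerivWithinAt) hf'

end DerivSign

noncomputable def stdGauss (t : ℝ) : ℝ := exp (-(t ^ 2) / 2)

noncomputable def stdGaussIntegral (x : ℝ) : ℝ := ∫ t in (0 : ℝ)..x, stdGauss t

@[fun_prop]
theorem continuous_stdGauss : Continuous stdGauss := by
  unfold stdGauss
  fun_prop

theorem hasDerivAt_stdGaussIntegral (x : ℝ) : HasDerivAt stdGaussIntegral (stdGauss x) x :=
  (continuous_stdGauss.integral_hasStrictDerivAt 0 x).hasDerivAt

theorem hasDerivAt_div_sqrt (x : ℝ) {v : ℝ} (hv : 0 < v) :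
    HasDerivAt (fun w => x / √w) (-(x / √v) / (2 * v)) v := by
  refine ((hasDerivAt_const v x).div (hasDerivAt_sqrt hv.ne') (sqrt_ne_zero'.2 hv)).congr_deriv ?_
  rw [sq_sqrt hv.le]
  field_simp
  ring

section GaussBox

variable {a b μ v : ℝ}

theorem gaussPDF_nonneg (μ v ξ : ℝ) : 0 ≤ gaussPDF μ v ξ := by
  unfold gaussPDF
  positivity

theorem gaussPDF_le_gaussPDF {x y : ℝ} (hv : 0 ≤ v) (h : |y - μ| ≤ |x - μ|) :
    gaussPDF μ v x ≤ gaussPDF μ v y := by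
  unfold gaussPDF
  gcongr ?_ * exp (?_ / _)
  exact neg_le_neg (sq_le_sq.2 h)

theorem gaussPDF_eq_stdGauss (μ ξ : ℝ) (hv : 0 < v) :
    gaussPDF μ v ξ = (√(2 * π))⁻¹ * (stdGauss ((ξ - μ) / √v) / √v) := by
  unfold gaussPDF stdGauss
  rw [sqrt_mul (by positivity), div_pow, sq_sqrt hv.le]
  field_simp

theorem gaussBoxProb_eq_intervalIntegral (hab : a ≤ b) :
    gaussBoxProb a b μ v = ∫ ξ in a..b, gaussPDF μ v ξ := by
  rw [gaussBoxProb, integral_Icc_eq_integral_Ioc, intervalIntegral.integral_of_le hab]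

theorem gaussBoxProb_eq_stdGaussIntegral (hab : a ≤ b) (hv : 0 < v) :
    gaussBoxProb a b μ v = (√(2 * π))⁻¹ *
      (stdGaussIntegral ((b - μ) / √v) - stdGaussIntegral ((a - μ) / √v)) := by
  rw [gaussBoxProb_eq_intervalIntegral hab]
  simp_rw [gaussPDF_eq_stdGauss _ _ hv]
  rw [intervalIntegral.integral_const_mul]
  congr 1
  refine intervalIntegral.integral_eq_sub_of_hasDerivAt
    (f := fun ξ => stdGaussIntegral ((ξ - μ) / √v)) (fun ξ _ => ?_) ?_
  · exact ((hasDerivAt_stdGaussIntegral _).comp ξ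
      (((hasDerivAt_id ξ).sub_const μ).div_const √v)).congr_deriv (by simp [div_eq_mul_inv])
  · exact (by fun_prop : Continuous fun ξ => stdGauss ((ξ - μ) / √v) / √v).intervalIntegrable _ _

theorem gaussBoxProb_reflect (hab : a ≤ b) (μ v : ℝ) :
    gaussBoxProb a b (a + b - μ) v = gaussBoxProb a b μ v := by
  have hpdf : ∀ ξ, gaussPDF (a + b - μ) v ξ = gaussPDF μ v (a + b - ξ) := by
    intro ξ
    unfold gaussPDF
    ring_nf
  simp_rw [gaussBoxProb_eq_intervalIntegral hab, hpdf]
  rw [intervalIntegral.integral_comp_sub_left, add_sub_cancel_right, add_sub_cancel_left]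

theorem hasDerivAt_gaussBoxProb_mean (hab : a ≤ b) (hv : 0 < v) (μ : ℝ) :
    HasDerivAt (fun μ => gaussBoxProb a b μ v) (gaussPDF μ v a - gaussPDF μ v b) μ := by
  have hshift (x : ℝ) : HasDerivAt (fun μ => (x - μ) / √v) (-1 / √v) μ :=
    ((hasDerivAt_id μ).const_sub x).div_const √v
  simp_rw [gaussBoxProb_eq_stdGaussIntegral hab hv, gaussPDF_eq_stdGauss _ _ hv]
  refine ((((hasDerivAt_stdGaussIntegral _).comp μ (hshift b)).sub
    ((hasDerivAt_stdGaussIntegral _).comp μ (hshift a))).const_mul _).congr_deriv ?_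
  ring

theorem hasDerivAt_gaussBoxProb_var (hab : a ≤ b) (hv : 0 < v) :
    HasDerivAt (gaussBoxProb a b μ)
      (((a - μ) * gaussPDF μ v a - (b - μ) * gaussPDF μ v b) / (2 * v)) v := by
  have hM := (((hasDerivAt_stdGaussIntegral _).comp v (hasDerivAt_div_sqrt (b - μ) hv)).sub
    ((hasDerivAt_stdGaussIntegral _).comp v (hasDerivAt_div_sqrt (a - μ) hv))).const_mul
    (√(2 * π))⁻¹
  have hF : gaussBoxProb a b μ =ᶠ[nhds v] fun w => (√(2 * π))⁻¹ *
      (stdGaussIntegral ((b - μ) / √w) - stdGaussIntegral ((a - μ) / √w)) :=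
    Filter.eventually_of_mem (Ioi_mem_nhds hv) fun w hw => gaussBoxProb_eq_stdGaussIntegral hab hw
  rw [gaussPDF_eq_stdGauss _ _ hv, gaussPDF_eq_stdGauss _ _ hv]
  refine (hM.congr_of_eventuallyEq hF).congr_deriv ?_
  ring

theorem antitoneOn_gaussBoxProb_mean (hab : a ≤ b) (hv : 0 < v) :
    AntitoneOn (fun μ => gaussBoxProb a b μ v) (Ici ((a + b) / 2)) := by
  refine antitoneOn_of_hasDerivAt_nonpos (convex_Ici _)
    (fun μ _ => hasDerivAt_gaussBoxProb_mean hab hv μ) fun μ hμ => ?_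
  rw [interior_Ici, mem_Ioi] at hμ
  refine sub_nonpos.2 (gaussPDF_le_gaussPDF hv.le ?_)
  rw [abs_sub_comm a μ, abs_of_pos (by linarith : 0 < μ - a)]
  exact abs_le.2 ⟨by linarith, by linarith⟩

theorem gaussBoxProb_le_of_abs_sub_le (hab : a ≤ b) (hv : 0 < v) {x y : ℝ}
    (h : |x - (a + b) / 2| ≤ |y - (a + b) / 2|) : gaussBoxProb a b y v ≤ gaussBoxProb a b x v :=
  le_of_abs_sub_le_of_antitoneOn (f := fun μ => gaussBoxProb a b μ v)
    (fun z => by rw [mul_div_cancel₀ _ two_ne_zero, gaussBoxProb_reflect hab])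
    (antitoneOn_gaussBoxProb_mean hab hv) h

end GaussBox

theorem mul_exp_le_mul_exp_iff {p q v : ℝ} (hp : 0 < p) (hq : 0 < q) :
    q * exp (-q ^ 2 / (2 * v)) ≤ p * exp (-p ^ 2 / (2 * v)) ↔
      log (q / p) ≤ (q ^ 2 - p ^ 2) / (2 * v) := by
  rw [← log_le_log_iff (by positivity) (by positivity), log_mul hq.ne' (exp_pos _).ne',
    log_mul hp.ne' (exp_pos _).ne', log_exp, log_exp, log_div hq.ne' hp.ne', sub_div, neg_div,
    neg_div]
  constructor <;> intro h <;> linarith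

/-- `Σc(μ)`, the peak of `F(μ,·)` when `μ ∉ [a,b]`. -/
noncomputable def criticalVar (a b μ : ℝ) : ℝ :=
  ((μ - a) ^ 2 - (μ - b) ^ 2) / (2 * log ((μ - a) / (μ - b)))

section CriticalVar

variable {a b μ v : ℝ}

theorem criticalVar_reflect (a b μ : ℝ) : criticalVar a b (a + b - μ) = criticalVar a b μ := by
  have hratio : (μ - a) / (μ - b) = ((b - μ) / (a - μ))⁻¹ := by
    rw [inv_div, ← neg_sub a μ, ← neg_sub b μ, neg_div_neg_eq]
  rw [criticalVar, criticalVar, hratio, log_inv]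
  ring_nf

theorem log_div_pos_of_lt (hab : a < b) (hμ : b < μ) : 0 < log ((μ - a) / (μ - b)) :=
  log_pos ((one_lt_div (by linarith)).2 (by linarith))

theorem criticalVar_pos (hab : a < b) (hμ : b < μ) : 0 < criticalVar a b μ :=
  div_pos (by nlinarith) (mul_pos two_pos (log_div_pos_of_lt hab hμ))

theorem varDerivNumerator_nonneg_iff (hab : a < b) (hμ : b < μ) (hv : 0 < v) :
    0 ≤ (a - μ) * gaussPDF μ v a - (b - μ) * gaussPDF μ v b ↔ v ≤ criticalVar a b μ := by
  have hL := log_div_pos_of_lt hab hμ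
  have hexpand : (a - μ) * gaussPDF μ v a - (b - μ) * gaussPDF μ v b =
      (√(2 * π * v))⁻¹ * ((μ - b) * exp (-(μ - b) ^ 2 / (2 * v)) -
        (μ - a) * exp (-(μ - a) ^ 2 / (2 * v))) := by
    unfold gaussPDF
    ring_nf
  rw [hexpand, mul_nonneg_iff_of_pos_left (by positivity), sub_nonneg,
    mul_exp_le_mul_exp_iff (by linarith) (by linarith), criticalVar,
    le_div_iff₀ (by positivity), le_div_iff₀ (by positivity)]
  constructor <;> intro h <;> linarith

theorem antitoneOn_gaussBoxProb_var_of_mem (hμ : μ ∈ Icc a b) :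
    AntitoneOn (gaussBoxProb a b μ) (Ioi 0) := by
  refine antitoneOn_of_hasDerivAt_nonpos (convex_Ioi 0)
    (fun v hv => hasDerivAt_gaussBoxProb_var (hμ.1.trans hμ.2) hv) fun v hv => ?_
  rw [interior_Ioi, mem_Ioi] at hv
  refine div_nonpos_of_nonpos_of_nonneg ?_ (by positivity)
  nlinarith [gaussPDF_nonneg μ v a, gaussPDF_nonneg μ v b, hμ.1, hμ.2]

theorem monotoneOn_gaussBoxProb_var_of_lt (hab : a < b) (hμ : b < μ) :
    MonotoneOn (gaussBoxProb a b μ) (Ioc 0 (criticalVar a b μ)) := by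
  refine monotoneOn_of_hasDerivAt_nonneg (convex_Ioc 0 _)
    (fun v hv => hasDerivAt_gaussBoxProb_var hab.le hv.1) fun v hv => ?_
  rw [interior_Ioc] at hv
  exact div_nonneg ((varDerivNumerator_nonneg_iff hab hμ hv.1).2 hv.2.le) (by linarith [hv.1])

theorem antitoneOn_gaussBoxProb_var_of_lt (hab : a < b) (hμ : b < μ) :
    AntitoneOn (gaussBoxProb a b μ) (Ici (criticalVar a b μ)) := by
  have hc := criticalVar_pos hab hμ
  refine antitoneOn_of_hasDerivAt_nonpos (convex_Ici _)
    (fun v hv => hasDerivAt_gaussBoxProb_var hab.le (hc.trans_le hv)) fun v hv => ?_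
  rw [interior_Ici, mem_Ioi] at hv
  have hneg := mt (varDerivNumerator_nonneg_iff hab hμ (hc.trans hv)).1 (not_le.2 hv)
  exact div_nonpos_of_nonpos_of_nonneg (le_of_not_ge hneg) (by linarith)

theorem gaussBoxProb_var_unimodal (hab : a < b) (hμ : μ ∉ Icc a b) :
    MonotoneOn (gaussBoxProb a b μ) (Ioc 0 (criticalVar a b μ)) ∧
      AntitoneOn (gaussBoxProb a b μ) (Ici (criticalVar a b μ)) := by
  rw [mem_Icc, not_and_or, not_le, not_le] at hμ
  rcases hμ with hμ | hμ
  · rw [← funext (gaussBoxProb_reflect hab.le μ), ← criticalVar_reflect a b μ]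
    exact ⟨monotoneOn_gaussBoxProb_var_of_lt hab (by linarith),
      antitoneOn_gaussBoxProb_var_of_lt hab (by linarith)⟩
  · exact ⟨monotoneOn_gaussBoxProb_var_of_lt hab hμ, antitoneOn_gaussBoxProb_var_of_lt hab hμ⟩

theorem min_gaussBoxProb_le (hab : a < b) {vL vU : ℝ} (hvL : 0 < vL) (hv : v ∈ Icc vL vU) :
    min (gaussBoxProb a b μ vL) (gaussBoxProb a b μ vU) ≤ gaussBoxProb a b μ v := by
  by_cases hμ : μ ∈ Icc a b
  · exact (min_le_right _ _).trans (antitoneOn_gaussBoxProb_var_of_mem hμ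
      (hvL.trans_le hv.1) (hvL.trans_le (hv.1.trans hv.2)) hv.2)
  · obtain ⟨hmono, hanti⟩ := gaussBoxProb_var_unimodal hab hμ
    exact min_le_of_monotoneOn_of_antitoneOn (hmono.mono (Icc_subset_Ioc_left hvL))
      (hanti.mono Icc_subset_Ici_self) hv

theorem gaussBoxProb_le_of_nearest (hab : a < b) {vL vU w : ℝ} (hvL : 0 < vL)
    (hv : v ∈ Icc vL vU) (hw_in : μ ∈ Icc a b → w = vL)
    (hw_out : μ ∉ Icc a b → w ∈ Icc vL vU ∧
      ∀ u ∈ Icc vL vU, |w - criticalVar a b μ| ≤ |u - criticalVar a b μ|) :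
    gaussBoxProb a b μ v ≤ gaussBoxProb a b μ w := by
  by_cases hμ : μ ∈ Icc a b
  · rw [hw_in hμ]
    exact antitoneOn_gaussBoxProb_var_of_mem hμ hvL (hvL.trans_le hv.1) hv.1
  · obtain ⟨hw, hnear⟩ := hw_out hμ
    obtain ⟨hmono, hanti⟩ := gaussBoxProb_var_unimodal hab hμ
    exact le_of_monotoneOn_of_antitoneOn_of_nearest (hmono.mono (Icc_subset_Ioc_left hvL))
      (hanti.mono Icc_subset_Ici_self) hv hw hnear

end CriticalVar

theorem gaussian_box_probability_extrema_general (a b μL μU vL vU : ℝ)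
    (hab : a < b) (hvL : 0 < vL)
    (μlo vlo μhi vhi : ℝ)
    (hμlo_max : ∀ μ ∈ Set.Icc μL μU, |μ - (a + b) / 2| ≤ |μlo - (a + b) / 2|)
    (hvlo_min : gaussBoxProb a b μlo vlo
      = min (gaussBoxProb a b μlo vL) (gaussBoxProb a b μlo vU))
    (hμhi_min : ∀ μ ∈ Set.Icc μL μU, |μhi - (a + b) / 2| ≤ |μ - (a + b) / 2|)
    (hvhi_in : μhi ∈ Set.Icc a b → vhi = vL)
    (hvhi_out : μhi ∉ Set.Icc a b →
      vhi ∈ Set.Icc vL vU ∧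
      ∀ v ∈ Set.Icc vL vU,
        |vhi - ((μhi - a) ^ 2 - (μhi - b) ^ 2) / (2 * Real.log ((μhi - a) / (μhi - b)))|
          ≤ |v - ((μhi - a) ^ 2 - (μhi - b) ^ 2) / (2 * Real.log ((μhi - a) / (μhi - b)))|) :
    ∀ μ ∈ Set.Icc μL μU, ∀ v ∈ Set.Icc vL vU,
      gaussBoxProb a b μlo vlo ≤ gaussBoxProb a b μ v ∧
      gaussBoxProb a b μ v ≤ gaussBoxProb a b μhi vhi := by
  intro μ hμ v hv
  have hv0 : 0 < v := hvL.trans_le hv.1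
  constructor
  · calc gaussBoxProb a b μlo vlo
        = min (gaussBoxProb a b μlo vL) (gaussBoxProb a b μlo vU) := hvlo_min
      _ ≤ gaussBoxProb a b μlo v := min_gaussBoxProb_le hab hvL hv
      _ ≤ gaussBoxProb a b μ v := gaussBoxProb_le_of_abs_sub_le hab.le hv0 (hμlo_max μ hμ)
  · calc gaussBoxProb a b μ v
        ≤ gaussBoxProb a b μhi v := gaussBoxProb_le_of_abs_sub_le hab.le hv0 (hμhi_min μ hμ)
      _ ≤ gaussBoxProb a b μhi vhi := gaussBoxProb_le_of_nearest hab hvL hv hvhi_in hvhi_out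

/-- Minimisation and maximisation of the Gaussian box probability over a mean/variance
rectangle `[μL,μU] × [vL,vU]`: with `μ̲*` a point of `{μL,μU}` maximising `|μ − μc|`,
`v̲* ∈ {vL,vU}` realising the smaller of the two values `F(μ̲*,·)`, `μ̄*` the point of
`[μL,μU]` minimising `|μ − μc|`, and `v̄*` equal to `vL` if `μ̄* ∈ [a,b]` and otherwise
the point of `[vL,vU]` closest to `vc(μ̄*)`, it holds that
`F(μ̲*,v̲*) ≤ F(μ,v) ≤ F(μ̄*,v̄*)` for all `μ ∈ [μL,μU]`, `v ∈ [vL,vU]`. -/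
theorem gaussian_box_probability_extrema (a b μL μU vL vU : ℝ)
    (hab : a < b) (hμ : μL ≤ μU) (hvL : 0 < vL) (hv : vL ≤ vU)
    (μlo vlo μhi vhi : ℝ)
    (hμlo_mem : μlo = μL ∨ μlo = μU)
    (hμlo_max : ∀ μ ∈ Set.Icc μL μU, |μ - (a + b) / 2| ≤ |μlo - (a + b) / 2|)
    (hvlo_mem : vlo = vL ∨ vlo = vU)
    (hvlo_min : gaussBoxProb a b μlo vlo
      = min (gaussBoxProb a b μlo vL) (gaussBoxProb a b μlo vU))
    (hμhi_mem : μhi ∈ Set.Icc μL μU)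
    (hμhi_min : ∀ μ ∈ Set.Icc μL μU, |μhi - (a + b) / 2| ≤ |μ - (a + b) / 2|)
    (hvhi_in : μhi ∈ Set.Icc a b → vhi = vL)
    (hvhi_out : μhi ∉ Set.Icc a b →
      vhi ∈ Set.Icc vL vU ∧
      ∀ v ∈ Set.Icc vL vU,
        |vhi - ((μhi - a) ^ 2 - (μhi - b) ^ 2) / (2 * Real.log ((μhi - a) / (μhi - b)))|
          ≤ |v - ((μhi - a) ^ 2 - (μhi - b) ^ 2) / (2 * Real.log ((μhi - a) / (μhi - b)))|) :
    ∀ μ ∈ Set.Icc μL μU, ∀ v ∈ Set.Icc vL vU,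
      gaussBoxProb a b μlo vlo ≤ gaussBoxProb a b μ v ∧
      gaussBoxProb a b μ v ≤ gaussBoxProb a b μhi vhi :=
  gaussian_box_probability_extrema_general a b μL μU vL vU hab hvL μlo vlo μhi vhi hμlo_max hvlo_min
    hμhi_min hvhi_in hvhi_out
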